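/- Let C be a binary projective three-weight linear code of length n, dimension k and minimum distance d, with A_n(C) > 0. Then every codeword of the dual code C^⊥ has even Hamming weight, A_2(C^⊥) = 0, and for every integer r with 2 ≤ r ≤ ⌊n/2⌋ one has, as an identity of integers, 2^{k−1}·A_{2r}(C^⊥) = binom(n, 2r) + (2^{k−1} − 1)·Σ_{(i,j): 0 ≤ i ≤ d, 0 ≤ j ≤ ⌊n/2⌋ − d, i + j = r} (−1)^i · binom(d, i) · binom(n − 2d, 2j). -/

import Mathlib

/-- Hamming weight of a binary vector: the number of nonzero coordinates. -/
noncomputable def wt {ι : Type*} (c : ι → ZMod 2) : ℕ := Nat.card {i : ι // c i ≠ 0}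

/-- Number of codewords of Hamming weight `w` in a set of binary vectors. -/
noncomputable def weightCount {ι : Type*} (C : Set (ι → ZMod 2)) (w : ℕ) : ℕ :=
  Nat.card {c : ι → ZMod 2 // c ∈ C ∧ wt c = w}

/-- The dual code: all vectors orthogonal (standard inner product) to every codeword. -/
def dualCode {ι : Type*} (C : Set (ι → ZMod 2)) : Set (ι → ZMod 2) :=
  {x | ∀ c ∈ C, ∑ᶠ i, x i * c i = 0}

/-- A code is projective if the minimum distance of its dual is at least 3. -/
def IsProjective {ι : Type*} (C : Set (ι → ZMod 2)) : Prop :=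
  ∀ x ∈ dualCode C, x ≠ 0 → 3 ≤ wt x

/-- `d` is the minimum distance of `C`: the least Hamming weight of a nonzero codeword. -/
def IsMinDist {ι : Type*} (C : Set (ι → ZMod 2)) (d : ℕ) : Prop :=
  (∃ c ∈ C, c ≠ 0 ∧ wt c = d) ∧ ∀ c ∈ C, c ≠ 0 → d ≤ wt c

/-- The number of nonzero Hamming weights occurring among codewords of `C`. -/
noncomputable def numNonzeroWeights {ι : Type*} (C : Set (ι → ZMod 2)) : ℕ :=
  Nat.card {i : ℕ | 1 ≤ i ∧ weightCount C i ≠ 0}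

/-- The codewords of weight `w` in `C` hold a 2-design with index `lam`: every pair of
distinct coordinate positions lies in the support of exactly `lam` codewords of weight `w`. -/
def HoldsTwoDesign {ι : Type*} (C : Set (ι → ZMod 2)) (w lam : ℕ) : Prop :=
  ∀ p q : ι, p ≠ q →
    Nat.card {c : ι → ZMod 2 // c ∈ C ∧ wt c = w ∧ c p ≠ 0 ∧ c q ≠ 0} = lam

/-!
Since `A_n(C) > 0`, the all-ones word lies in `C`. Hence every dual codeword has even weight,
and `c ↦ c + 1` matches the codewords of weight `w` with those of weight `n - w`. Together with
minimality of `d`, three nonzero weights force the weights to be `d < n - d < n`, and counting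
`|C| = 2^k` gives `A_d = A_{n-d} = 2^{k-1} - 1`. The MacWilliams identity
`|C| A_w(C^⊥) = ∑_j A_j(C) K_w(j)`, where `K_w(j)` is the coefficient of `X^w` in
`(1 - X)^j (1 + X)^(n-j)`, then determines `A_{2r}(C^⊥)`: `K_{2r}(n - j) = K_{2r}(j)`, and the
alternating sum comes from `(1 - X)^d (1 + X)^(n-d) = (1 - X²)^d (1 + X)^(n-2d)`.
-/

open Finset Polynomial

section HammingWeight

variable {ι : Type*} [Fintype ι]

lemma wt_eq_hammingNorm (c : ι → ZMod 2) : wt c = hammingNorm c := by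
  classical
  rw [wt, Nat.card_eq_fintype_card, Fintype.card_subtype, hammingNorm]

lemma wt_le_card (c : ι → ZMod 2) : wt c ≤ Fintype.card ι := by
  rw [wt_eq_hammingNorm]
  exact hammingNorm_le_card_fintype

lemma wt_eq_zero_iff {c : ι → ZMod 2} : wt c = 0 ↔ c = 0 := by
  rw [wt_eq_hammingNorm, hammingNorm_eq_zero]

lemma wt_add_one (c : ι → ZMod 2) : wt (c + 1) = Fintype.card ι - wt c := by
  classical
  have h : ∀ a : ZMod 2, a + 1 ≠ 0 ↔ ¬a ≠ 0 := by decide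
  simp only [wt_eq_hammingNorm, hammingNorm, Pi.add_apply, Pi.one_apply, h]
  rw [filter_not, card_sdiff_of_subset (filter_subset _ _), card_univ]

lemma wt_one : wt (1 : ι → ZMod 2) = Fintype.card ι := by
  simpa [wt_eq_zero_iff.mpr rfl] using wt_add_one (0 : ι → ZMod 2)

lemma wt_eq_card_iff {c : ι → ZMod 2} : wt c = Fintype.card ι ↔ c = 1 := by
  have h := wt_add_one c
  have := wt_le_card c
  rw [← ZModModule.neg_eq_self (1 : ι → ZMod 2), ← add_eq_zero_iff_eq_neg, ← wt_eq_zero_iff]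
  omega

lemma sum_eq_wt (x : ι → ZMod 2) : ∑ i, x i = (wt x : ZMod 2) := by
  classical
  have h : ∀ a : ZMod 2, a = if a ≠ 0 then 1 else 0 := by decide
  rw [wt_eq_hammingNorm, hammingNorm, ← sum_boole]
  exact sum_congr rfl fun i _ => h (x i)

end HammingWeight

section WeightCount

variable {ι : Type*} [Fintype ι]

lemma weightCount_eq_card_filter [DecidableEq ι] (S : Set (ι → ZMod 2)) [DecidablePred (· ∈ S)]
    (w : ℕ) :
    weightCount S w = #{c | c ∈ S ∧ wt c = w} := by
  rw [weightCount, Nat.card_eq_fintype_card, Fintype.card_subtype]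

lemma weightCount_ne_zero_iff {S : Set (ι → ZMod 2)} {w : ℕ} :
    weightCount S w ≠ 0 ↔ ∃ c ∈ S, wt c = w := by
  classical
  simp [weightCount_eq_card_filter]

lemma sum_weightCount_mul [DecidableEq ι] (S : Set (ι → ZMod 2)) [DecidablePred (· ∈ S)]
    (f : ℕ → ℤ) :
    ∑ j ∈ range (Fintype.card ι + 1), (weightCount S j : ℤ) * f j =
      ∑ c ∈ {c | c ∈ S}, f (wt c) := by
  rw [← sum_fiberwise_of_maps_to (g := wt) (t := range (Fintype.card ι + 1))
    fun c _ => mem_range_succ_iff.mpr (wt_le_card c)]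
  refine sum_congr rfl fun j _ => ?_
  rw [sum_congr rfl fun c hc => by rw [(mem_filter.mp hc).2], sum_const, nsmul_eq_mul,
    weightCount_eq_card_filter, filter_filter]

lemma sum_weightCount (S : Set (ι → ZMod 2)) :
    ∑ j ∈ range (Fintype.card ι + 1), (weightCount S j : ℤ) = Nat.card S := by
  classical
  simpa [Nat.card_eq_fintype_card, Fintype.card_subtype] using sum_weightCount_mul S fun _ => 1

lemma weightCount_dualCode_eq_zero {S : Set (ι → ZMod 2)} (hS : IsProjective S) {w : ℕ}
    (hw₀ : w ≠ 0) (hw₃ : w < 3) : weightCount (dualCode S) w = 0 := by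
  by_contra h
  obtain ⟨x, hx, rfl⟩ := weightCount_ne_zero_iff.mp h
  have := hS x hx (mt wt_eq_zero_iff.mpr hw₀)
  omega

lemma mem_dualCode_iff {S : Set (ι → ZMod 2)} {x : ι → ZMod 2} :
    x ∈ dualCode S ↔ ∀ c ∈ S, x ⬝ᵥ c = 0 := by
  simp [dualCode, dotProduct, finsum_eq_sum_of_fintype]

lemma even_wt_of_mem_dualCode {S : Set (ι → ZMod 2)} (hS : 1 ∈ S) {x : ι → ZMod 2}
    (hx : x ∈ dualCode S) : Even (wt x) := by
  have := mem_dualCode_iff.mp hx 1 hS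
  rwa [dotProduct_one, sum_eq_wt, ZMod.natCast_eq_zero_iff_even] at this

variable (C : Submodule (ZMod 2) (ι → ZMod 2))

lemma weightCount_zero : weightCount (C : Set (ι → ZMod 2)) 0 = 1 := by
  rw [weightCount, Nat.card_eq_one_iff_exists]
  refine ⟨⟨0, C.zero_mem, wt_eq_zero_iff.mpr rfl⟩, fun ⟨c, _, hc⟩ => ?_⟩
  simpa using wt_eq_zero_iff.mp hc

variable {C}

lemma weightCount_card_sub (hC : (1 : ι → ZMod 2) ∈ C) {w : ℕ} (hw : w ≤ Fintype.card ι) :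
    weightCount (C : Set (ι → ZMod 2)) (Fintype.card ι - w) =
      weightCount (C : Set (ι → ZMod 2)) w := by
  refine Nat.card_congr (Equiv.subtypeEquiv (Equiv.addRight 1) fun c => ?_)
  have := wt_le_card c
  simp only [SetLike.mem_coe, Equiv.coe_addRight, C.add_mem_iff_left hC, wt_add_one]
  exact and_congr_right fun _ => by omega

lemma one_mem_of_weightCount_card_ne_zero
    (h : weightCount (C : Set (ι → ZMod 2)) (Fintype.card ι) ≠ 0) : (1 : ι → ZMod 2) ∈ C := by
  obtain ⟨c, hc, hwt⟩ := weightCount_ne_zero_iff.mp h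
  rwa [← wt_eq_card_iff.mp hwt]

end WeightCount

lemma AddChar.map_sum_eq_prod {α A M : Type*} [AddCommMonoid A] [CommMonoid M] (ψ : AddChar A M)
    (s : Finset α) (f : α → A) : ψ (∑ i ∈ s, f i) = ∏ i ∈ s, ψ (f i) := by
  induction s using Finset.cons_induction with
  | empty => simp
  | cons a s ha ih => rw [sum_cons, prod_cons, ψ.map_add_eq_mul, ih]

noncomputable def signChar : AddChar (ZMod 2) ℤ where
  toFun a := if a = 0 then 1 else -1
  map_zero_eq_one' := rfl
  map_add_eq_mul' := by decide

lemma signChar_apply (a : ZMod 2) : signChar a = if a = 0 then 1 else -1 := rfl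

lemma signChar_eq_one_iff {a : ZMod 2} : signChar a = 1 ↔ a = 0 := by
  revert a; decide

noncomputable def krawtchouk (n w j : ℕ) : ℤ :=
  ((1 - X) ^ j * (1 + X) ^ (n - j) : ℤ[X]).coeff w

section MacWilliams

variable {ι : Type*} [Fintype ι]

open Classical in
lemma sum_signChar_dotProduct (C : Submodule (ZMod 2) (ι → ZMod 2)) (x : ι → ZMod 2) :
    ∑ c : C, signChar (x ⬝ᵥ c) =
      if x ∈ dualCode (C : Set (ι → ZMod 2)) then (Nat.card C : ℤ) else 0 := by
  let ψ : AddChar C ℤ := signChar.compAddMonoidHom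
    ((dotProductBilin (ZMod 2) (ZMod 2) x).comp C.subtype).toAddMonoidHom
  have hψ : ψ = 0 ↔ x ∈ dualCode (C : Set (ι → ZMod 2)) := by
    simp [ψ, AddChar.eq_zero_iff, signChar_eq_one_iff, mem_dualCode_iff]
  change ∑ c, ψ c = _
  rw [ψ.sum_eq_ite]
  simp only [hψ, Nat.card_eq_fintype_card]

lemma sum_signChar_dotProduct_mul_X_pow_wt [DecidableEq ι] (c : ι → ZMod 2) :
    ∑ x : ι → ZMod 2, Polynomial.C (signChar (x ⬝ᵥ c)) * X ^ wt x =
      (1 - X) ^ wt c * (1 + X) ^ (Fintype.card ι - wt c) := by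
  have hcoord : ∀ b : ZMod 2,
      ∑ a : ZMod 2, Polynomial.C (signChar (a * b)) * X ^ (if a ≠ 0 then 1 else 0) =
        if b ≠ 0 then 1 - X else (1 + X : ℤ[X]) := by
    intro b
    rw [show (univ : Finset (ZMod 2)) = {0, 1} from rfl, sum_pair zero_ne_one]
    rcases (show ∀ b : ZMod 2, b = 0 ∨ b = 1 by decide) b with rfl | rfl <;>
      simp [signChar_apply, sub_eq_add_neg]
  calc ∑ x : ι → ZMod 2, Polynomial.C (signChar (x ⬝ᵥ c)) * X ^ wt x
      = ∑ x : ι → ZMod 2, ∏ i, Polynomial.C (signChar (x i * c i)) *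
          X ^ (if x i ≠ 0 then 1 else 0) := by
        refine sum_congr rfl fun x _ => ?_
        rw [prod_mul_distrib, ← map_prod, ← AddChar.map_sum_eq_prod, prod_pow_eq_pow_sum,
          wt_eq_hammingNorm, hammingNorm, card_filter]
        rfl
    _ = ∏ i, if c i ≠ 0 then 1 - X else 1 + X := by
        rw [← Fintype.prod_sum (fun i a => Polynomial.C (signChar (a * c i)) *
          X ^ (if a ≠ 0 then 1 else 0))]
        exact prod_congr rfl fun i _ => hcoord (c i)
    _ = (1 - X) ^ wt c * (1 + X) ^ (Fintype.card ι - wt c) := by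
        have := card_filter_add_card_filter_not (s := univ) fun i => c i ≠ 0
        rw [card_univ] at this
        rw [prod_ite, prod_const, prod_const, wt_eq_hammingNorm, hammingNorm]
        congr 2
        omega

lemma sum_signChar_dotProduct_of_wt_eq [DecidableEq ι] (c : ι → ZMod 2) (w : ℕ) :
    ∑ x with wt x = w, signChar (x ⬝ᵥ c) = krawtchouk (Fintype.card ι) w (wt c) := by
  rw [krawtchouk, ← sum_signChar_dotProduct_mul_X_pow_wt, finsetSum_coeff, sum_filter]
  simp only [coeff_C_mul_X_pow, eq_comm]

theorem card_mul_weightCount_dualCode (C : Submodule (ZMod 2) (ι → ZMod 2)) (w : ℕ) :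
    (Nat.card C : ℤ) * weightCount (dualCode (C : Set (ι → ZMod 2))) w =
      ∑ j ∈ range (Fintype.card ι + 1),
        (weightCount (C : Set (ι → ZMod 2)) j : ℤ) * krawtchouk (Fintype.card ι) w j := by
  classical
  calc (Nat.card C : ℤ) * weightCount (dualCode (C : Set (ι → ZMod 2))) w
      = ∑ x with wt x = w, ∑ c : C, signChar (x ⬝ᵥ (c : ι → ZMod 2)) := by
        simp only [sum_signChar_dotProduct, sum_ite, sum_const_zero, add_zero, sum_const,
          filter_filter, weightCount_eq_card_filter, nsmul_eq_mul]
        rw [mul_comm, filter_congr fun x _ => and_comm]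
    _ = ∑ c : C, ∑ x with wt x = w, signChar (x ⬝ᵥ (c : ι → ZMod 2)) := by rw [sum_comm]
    _ = ∑ c ∈ {c | c ∈ C}, krawtchouk (Fintype.card ι) w (wt c) := by
        simp only [sum_signChar_dotProduct_of_wt_eq]
        symm
        apply sum_subtype
        simp
    _ = _ := (sum_weightCount_mul _ _).symm

end MacWilliams

section Krawtchouk

lemma coeff_one_sub_X_pow {R : Type*} [CommRing R] (j i : ℕ) :
    ((1 - X) ^ j : R[X]).coeff i = (-1) ^ i * j.choose i := by
  have h : ((1 - X) ^ j : R[X]) = ((1 + X) ^ j).comp (Polynomial.C (-1) * X) := by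
    simp [pow_comp, sub_eq_add_neg]
  rw [h, comp_C_mul_X_coeff, coeff_one_add_X_pow, mul_comm]

lemma coeff_expand_two_mul {R : Type*} [CommSemiring R] (P Q : R[X]) (r : ℕ) :
    (expand R 2 P * Q).coeff (2 * r) =
      ∑ p ∈ antidiagonal r, P.coeff p.1 * Q.coeff (2 * p.2) := by
  rw [coeff_mul]
  symm
  refine sum_bij_ne_zero (fun p _ _ => (2 * p.1, 2 * p.2)) ?_ ?_ ?_ ?_
  · intro p hp _
    simp only [HasAntidiagonal.mem_antidiagonal] at hp ⊢
    omega
  · intro p _ _ q _ _ h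
    simp only [Prod.mk.injEq] at h
    exact Prod.ext (by omega) (by omega)
  · rintro ⟨q₁, q₂⟩ hq hne
    rw [coeff_expand two_pos] at hne
    obtain ⟨a, rfl⟩ : 2 ∣ q₁ := by
      by_contra h
      simp [h] at hne
    simp only [HasAntidiagonal.mem_antidiagonal] at hq
    obtain rfl : q₂ = 2 * (r - a) := by omega
    refine ⟨(a, r - a), by simp only [HasAntidiagonal.mem_antidiagonal]; omega, ?_, rfl⟩
    simpa using hne
  · intro p _ _
    rw [coeff_expand two_pos, if_pos (dvd_mul_right 2 _), Nat.mul_div_cancel_left _ two_pos]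

lemma krawtchouk_zero_right (n w : ℕ) : krawtchouk n w 0 = n.choose w := by
  simp [krawtchouk, coeff_one_add_X_pow]

lemma krawtchouk_sub_right {n j : ℕ} (h : j ≤ n) (w : ℕ) :
    krawtchouk n w (n - j) = (-1) ^ w * krawtchouk n w j := by
  have hcomp : ((1 - X) ^ (n - j) * (1 + X) ^ (n - (n - j)) : ℤ[X]) =
      ((1 - X) ^ j * (1 + X) ^ (n - j) : ℤ[X]).comp (Polynomial.C (-1) * X) := by
    rw [Nat.sub_sub_self h]
    simp [mul_comp, pow_comp, sub_eq_add_neg, mul_comm]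
  rw [krawtchouk, hcomp, comp_C_mul_X_coeff, mul_comm, krawtchouk]

lemma krawtchouk_two_mul {n j : ℕ} (h : 2 * j ≤ n) (r : ℕ) :
    krawtchouk n (2 * r) j =
      ∑ p ∈ antidiagonal r, (-1 : ℤ) ^ p.1 * j.choose p.1 * (n - 2 * j).choose (2 * p.2) := by
  have hfactor : ((1 - X) ^ j * (1 + X) ^ (n - j) : ℤ[X]) =
      expand ℤ 2 ((1 - X) ^ j) * (1 + X) ^ (n - 2 * j) := by
    rw [show n - j = j + (n - 2 * j) by omega, pow_add, ← mul_assoc, ← mul_pow, map_pow, map_sub,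
      map_one, expand_X]
    ring
  simp only [krawtchouk, hfactor, coeff_expand_two_mul, coeff_one_sub_X_pow, coeff_one_add_X_pow,
    mul_assoc]

end Krawtchouk

lemma sum_filter_range_product_eq_sum_antidiagonal (n d r : ℕ) :
    ∑ p ∈ (range (d + 1) ×ˢ range (n / 2 - d + 1)).filter (fun p => p.1 + p.2 = r),
        (-1 : ℤ) ^ p.1 * d.choose p.1 * (n - 2 * d).choose (2 * p.2) =
      ∑ p ∈ antidiagonal r, (-1 : ℤ) ^ p.1 * d.choose p.1 * (n - 2 * d).choose (2 * p.2) := by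
  refine sum_subset (fun p hp => ?_) fun p _ hp => ?_
  · simp only [mem_filter] at hp
    exact HasAntidiagonal.mem_antidiagonal.mpr hp.2
  · simp only [mem_filter, mem_product, mem_range, not_and_or, not_lt] at hp
    rcases hp with (hp | hp) | hp
    · rw [Nat.choose_eq_zero_of_lt (by omega)]
      simp
    · rw [Nat.choose_eq_zero_of_lt (n := n - 2 * d) (by omega)]
      simp
    · simp_all

section ThreeWeight

variable {ι : Type*} [Fintype ι] {C : Submodule (ZMod 2) (ι → ZMod 2)} {d : ℕ}

lemma nonzeroWeights_eq_of_three_weight (hC : (1 : ι → ZMod 2) ∈ C)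
    (hd : IsMinDist (C : Set (ι → ZMod 2)) d) (h3 : numNonzeroWeights (C : Set (ι → ZMod 2)) = 3) :
    0 < d ∧ 2 * d < Fintype.card ι ∧ {i | 1 ≤ i ∧ weightCount (C : Set (ι → ZMod 2)) i ≠ 0} =
      {d, Fintype.card ι - d, Fintype.card ι} := by
  set n := Fintype.card ι
  set W := {i | 1 ≤ i ∧ weightCount (C : Set (ι → ZMod 2)) i ≠ 0}
  obtain ⟨⟨c₀, hc₀, hc₀_ne, rfl⟩, hmin⟩ := hd
  have hW : W.ncard = 3 := h3
  have hbounds : ∀ w ∈ W, wt c₀ ≤ w ∧ w ≤ n := by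
    rintro w ⟨hw, hw'⟩
    obtain ⟨c, hc, rfl⟩ := weightCount_ne_zero_iff.mp hw'
    exact ⟨hmin c hc fun h => by simp [h, wt_eq_zero_iff.mpr] at hw, wt_le_card c⟩
  have hreflect : ∀ w ∈ W, w < n → n - w ∈ W := fun w hw hwn =>
    ⟨by omega, by rw [weightCount_card_sub hC (hbounds w hw).2]; exact hw.2⟩
  have hd₁ : 1 ≤ wt c₀ := Nat.one_le_iff_ne_zero.mpr (mt wt_eq_zero_iff.mp hc₀_ne)
  have hdW : wt c₀ ∈ W := ⟨hd₁, weightCount_ne_zero_iff.mpr ⟨c₀, hc₀, rfl⟩⟩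
  have hnW : n ∈ W := ⟨hd₁.trans (wt_le_card c₀), weightCount_ne_zero_iff.mpr ⟨1, hC, wt_one⟩⟩
  have hWfin : W.Finite := (Set.finite_Iic n).subset fun w hw => (hbounds w hw).2
  -- `w ↦ n - w` maps `W \ {n}` into `W ⊆ [d, n]`, so `W ⊆ [d, n - d] ∪ {n}`.
  have h2d : 2 * wt c₀ < n := by
    by_contra h
    have hsub : W ⊆ {wt c₀, n} := by
      intro w hw
      by_cases hwn : w = n
      · simp [hwn]
      · have := (hbounds _ (hreflect w hw (by have := (hbounds w hw).2; omega))).1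
        have := (hbounds w hw).1
        simp only [Set.mem_insert_iff, Set.mem_singleton_iff]
        omega
    have := (Set.ncard_le_ncard hsub).trans (Set.ncard_insert_le _ _)
    simp [hW] at this
  refine ⟨hd₁, h2d, (Set.eq_of_subset_of_ncard_le ?_ ?_ hWfin).symm⟩
  · intro w hw
    simp only [Set.mem_insert_iff, Set.mem_singleton_iff] at hw
    rcases hw with rfl | rfl | rfl
    · exact hdW
    · exact hreflect _ hdW (by omega)
    · exact hnW
  · rw [hW, Set.ncard_eq_three.mpr ⟨_, _, _, by omega, by omega, by omega, rfl⟩]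

lemma sum_weightCount_mul_of_three_weight (hC : (1 : ι → ZMod 2) ∈ C)
    (hd : IsMinDist (C : Set (ι → ZMod 2)) d) (h3 : numNonzeroWeights (C : Set (ι → ZMod 2)) = 3)
    (f : ℕ → ℤ) :
    ∑ j ∈ range (Fintype.card ι + 1), (weightCount (C : Set (ι → ZMod 2)) j : ℤ) * f j =
      f 0 + weightCount (C : Set (ι → ZMod 2)) d * (f d + f (Fintype.card ι - d)) +
        f (Fintype.card ι) := by
  obtain ⟨hd₀, h2d, hW⟩ := nonzeroWeights_eq_of_three_weight hC hd h3
  have hsym := weightCount_card_sub hC (w := d) (by omega)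
  have hone : weightCount (C : Set (ι → ZMod 2)) (Fintype.card ι) = 1 := by
    simpa [weightCount_zero] using weightCount_card_sub hC (Nat.zero_le (Fintype.card ι))
  generalize Fintype.card ι = n at *
  have hsupp : ∀ j ∉ ({0, d, n - d, n} : Finset ℕ), weightCount (C : Set (ι → ZMod 2)) j = 0 := by
    intro j hj
    by_contra h
    have : j ∈ ({d, n - d, n} : Set ℕ) := hW ▸ ⟨Nat.one_le_iff_ne_zero.mpr (by simp_all), h⟩
    simp_all
  rw [← sum_subset (s₁ := {0, d, n - d, n}) (fun j hj => by simp at hj; simp; omega)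
    fun j _ hj => by simp [hsupp j hj]]
  rw [sum_insert (by simp; omega), sum_insert (by simp; omega), sum_insert (by simp; omega),
    sum_singleton, weightCount_zero, hsym, hone]
  push_cast
  ring

lemma card_eq_two_mul_weightCount_add_one (hC : (1 : ι → ZMod 2) ∈ C)
    (hd : IsMinDist (C : Set (ι → ZMod 2)) d) (h3 : numNonzeroWeights (C : Set (ι → ZMod 2)) = 3) :
    Nat.card C = 2 * (weightCount (C : Set (ι → ZMod 2)) d + 1) := by
  have h := sum_weightCount_mul_of_three_weight hC hd h3 fun _ => 1
  simp only [mul_one, sum_weightCount, SetLike.coe_sort_coe] at h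
  zify
  linarith

lemma two_pow_finrank_sub_one_eq (hC : (1 : ι → ZMod 2) ∈ C)
    (hd : IsMinDist (C : Set (ι → ZMod 2)) d) (h3 : numNonzeroWeights (C : Set (ι → ZMod 2)) = 3) :
    2 ^ (Module.finrank (ZMod 2) C - 1) = weightCount (C : Set (ι → ZMod 2)) d + 1 := by
  have hcard := card_eq_two_mul_weightCount_add_one hC hd h3
  rw [Module.natCard_eq_pow_finrank (K := ZMod 2), Nat.card_zmod] at hcard
  generalize Module.finrank (ZMod 2) C = k at hcard ⊢
  rcases k with _ | k
  · rw [pow_zero] at hcard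
    omega
  · rw [pow_succ] at hcard
    rw [Nat.add_sub_cancel]
    omega

end ThreeWeight

theorem dual_weight_distribution_of_projective_three_weight (n k d : ℕ) (C : Submodule (ZMod 2) (Fin n → ZMod 2))
    (hk : Module.finrank (ZMod 2) C = k)
    (hd : IsMinDist (C : Set (Fin n → ZMod 2)) d)
    (hproj : IsProjective (C : Set (Fin n → ZMod 2)))
    (h3 : numNonzeroWeights (C : Set (Fin n → ZMod 2)) = 3)
    (hAn : 0 < weightCount (C : Set (Fin n → ZMod 2)) n) :
    (∀ x ∈ dualCode (C : Set (Fin n → ZMod 2)), Even (wt x)) ∧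
    weightCount (dualCode (C : Set (Fin n → ZMod 2))) 2 = 0 ∧
    ∀ r : ℕ, 2 ≤ r → r ≤ n / 2 →
      (2 : ℤ) ^ (k - 1) * weightCount (dualCode (C : Set (Fin n → ZMod 2))) (2 * r) =
        (n.choose (2 * r) : ℤ) + ((2 : ℤ) ^ (k - 1) - 1) *
          ∑ p ∈ (Finset.range (d + 1) ×ˢ Finset.range (n / 2 - d + 1)).filter
              (fun p => p.1 + p.2 = r),
            (-1 : ℤ) ^ p.1 * (d.choose p.1) * ((n - 2 * d).choose (2 * p.2)) := by
  have hC : (1 : Fin n → ZMod 2) ∈ C :=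
    one_mem_of_weightCount_card_ne_zero (by simpa using hAn.ne')
  obtain ⟨-, h2d, -⟩ := nonzeroWeights_eq_of_three_weight hC hd h3
  have hdist := sum_weightCount_mul_of_three_weight hC hd h3
  simp only [Fintype.card_fin] at hdist h2d
  have hA := hk ▸ two_pow_finrank_sub_one_eq hC hd h3
  refine ⟨fun x hx => even_wt_of_mem_dualCode hC hx,
    weightCount_dualCode_eq_zero hproj two_ne_zero (by norm_num), fun r _ _ => ?_⟩
  have hM := card_mul_weightCount_dualCode C (2 * r)
  have hK₀ := krawtchouk_sub_right (Nat.zero_le n) (2 * r)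
  have hKd := krawtchouk_sub_right (Nat.le_of_lt (by omega : d < n)) (2 * r)
  rw [Nat.sub_zero] at hK₀
  rw [Fintype.card_fin, hdist, card_eq_two_mul_weightCount_add_one hC hd h3, hK₀, hKd,
    krawtchouk_zero_right, krawtchouk_two_mul h2d.le, Even.neg_one_pow ⟨r, two_mul r⟩] at hM
  rw [sum_filter_range_product_eq_sum_antidiagonal, ← Nat.cast_ofNat, ← Nat.cast_pow, hA]
  push_cast at hM ⊢
  linarith
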